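/- The FBG transform is inverted by the formula (26): for every continuous compactly supported u : ℝ² → ℂ and almost every x ∈ ℝ², u(x) = (2π)⁻¹ ∫_{[0,2π]²} e^{i η·x} û(x − [x]; η) dη, where û(y;η) = (2π)⁻¹ Σ_{α∈ℤ²} e^{-i η·(y+α)} u(y+α) and [x] = (⌊x₁⌋, ⌊x₂⌋) is the componentwise integer part of x. -/

import Mathlib

open MeasureTheory Complex

/-- The pointwise Floquet–Bloch–Gelfand transform of a function `u : ℝ² → ℂ`,
evaluated at the cell variable `y` and dual variable `η`:
`û(y;η) = (2π)⁻¹ Σ_{α∈ℤ²} e^{-i η·(y+α)} u(y+α)`. -/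
noncomputable def fbgTransform (u : ℝ × ℝ → ℂ) (y η : ℝ × ℝ) : ℂ :=
  (2 * Real.pi : ℂ)⁻¹ *
    ∑' α : ℤ × ℤ,
      Complex.exp (-(Complex.I * (η.1 * (y.1 + (α.1 : ℝ)) + η.2 * (y.2 + (α.2 : ℝ))))) *
        u (y.1 + (α.1 : ℝ), y.2 + (α.2 : ℝ))

/-!
Fix `x` and a lattice point `m`, and put `y = x - m`. Since `u` has compact support, only finitely
many translates `u (y + α)` are nonzero, so `η ↦ e^{iη·x} û(y;η)` is the trigonometric polynomial
`(2π)⁻¹ Σ_α u(y + α) e^{i(m - α)·η}`. Integrating over `[0,2π]²` kills every character except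
the one with `α = m`, which leaves `2π u(x)`.
-/

theorem integral_Icc_exp_I_mul_intCast_mul (k : ℤ) :
    ∫ t in Set.Icc (0:ℝ) (2 * Real.pi), exp (I * k * t) =
      if k = 0 then (2 * Real.pi : ℂ) else 0 := by
  rw [integral_Icc_eq_integral_Ioc, ← intervalIntegral.integral_of_le Real.two_pi_pos.le]
  split_ifs with hk
  · simp [hk]
  · have hc : I * k ≠ 0 := mul_ne_zero I_ne_zero (Int.cast_ne_zero.mpr hk)
    have hperiod : exp (I * k * (2 * Real.pi)) = 1 := by
      rw [← exp_int_mul_two_pi_mul_I k]; ring_nf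
    rw [integral_exp_mul_complex hc]
    push_cast
    simp [hperiod]

theorem integral_Icc_prod_exp_I_mul_intCast_dot (k : ℤ × ℤ) :
    ∫ η in Set.Icc (0:ℝ) (2 * Real.pi) ×ˢ Set.Icc (0:ℝ) (2 * Real.pi),
        exp (I * (k.1 * η.1 + k.2 * η.2)) =
      if k = 0 then (2 * Real.pi : ℂ) ^ 2 else 0 := by
  have hsplit : ∀ η : ℝ × ℝ,
      exp (I * (k.1 * η.1 + k.2 * η.2)) = exp (I * k.1 * η.1) * exp (I * k.2 * η.2) := by
    intro η; rw [← exp_add]; ring_nf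
  simp_rw [hsplit]
  rw [Measure.volume_eq_prod, ← Measure.prod_restrict,
    integral_prod_mul (fun t : ℝ => exp (I * k.1 * t)) (fun t : ℝ => exp (I * k.2 * t)),
    integral_Icc_exp_I_mul_intCast_mul, integral_Icc_exp_I_mul_intCast_mul]
  obtain ⟨k₁, k₂⟩ := k
  by_cases h₁ : k₁ = 0 <;> by_cases h₂ : k₂ = 0 <;> simp [h₁, h₂, sq]

theorem isometry_add_intCast (y : ℝ × ℝ) :
    Isometry fun α : ℤ × ℤ => (y.1 + α.1, y.2 + α.2) :=
  Isometry.of_dist_eq fun α β => by simp [Prod.dist_eq, Int.dist_cast_real]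

theorem HasCompactSupport.finite_support_add_intCast {M : Type*} [Zero M] {u : ℝ × ℝ → M}
    (hu : HasCompactSupport u) (y : ℝ × ℝ) :
    (Function.support fun α : ℤ × ℤ => u (y.1 + α.1, y.2 + α.2)).Finite :=
  ((isometry_add_intCast y).isClosedEmbedding.isCompact_preimage hu).finite_of_discrete.subset
    fun _ hα => subset_tsupport u hα

theorem fbgTransform_eq_sum {u : ℝ × ℝ → ℂ} {y : ℝ × ℝ} {s : Finset (ℤ × ℤ)}
    (hs : (Function.support fun α : ℤ × ℤ => u (y.1 + α.1, y.2 + α.2)) ⊆ s) (η : ℝ × ℝ) :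
    fbgTransform u y η = (2 * Real.pi : ℂ)⁻¹ *
      ∑ α ∈ s, exp (-(I * (η.1 * (y.1 + (α.1 : ℝ)) + η.2 * (y.2 + (α.2 : ℝ))))) *
        u (y.1 + α.1, y.2 + α.2) := by
  rw [fbgTransform, tsum_eq_sum (s := s) fun α hα => ?_]
  rw [Function.notMem_support.mp fun h => hα (hs h), mul_zero]

theorem eq_inv_two_pi_mul_integral_exp_mul_fbgTransform {u : ℝ × ℝ → ℂ}
    (hu : HasCompactSupport u) (x : ℝ × ℝ) (m : ℤ × ℤ) :
    u x = (2 * Real.pi : ℂ)⁻¹ *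
      ∫ η in Set.Icc (0:ℝ) (2 * Real.pi) ×ˢ Set.Icc (0:ℝ) (2 * Real.pi),
        exp (I * (η.1 * x.1 + η.2 * x.2)) * fbgTransform u (x.1 - m.1, x.2 - m.2) η := by
  set y : ℝ × ℝ := (x.1 - m.1, x.2 - m.2)
  set s := (hu.finite_support_add_intCast y).toFinset
  have hs : (Function.support fun α : ℤ × ℤ => u (y.1 + α.1, y.2 + α.2)) ⊆ s := by simp [s]
  have hphase : ∀ (η : ℝ × ℝ) (α : ℤ × ℤ),
      exp (I * (η.1 * x.1 + η.2 * x.2)) *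
          exp (-(I * (η.1 * (y.1 + (α.1 : ℝ)) + η.2 * (y.2 + (α.2 : ℝ))))) =
        exp (I * ((m - α).1 * η.1 + (m - α).2 * η.2)) := by
    intro η α
    rw [← exp_add]
    simp only [y, Prod.fst_sub, Prod.snd_sub]
    push_cast
    ring_nf
  have hintegrand : ∀ η : ℝ × ℝ,
      exp (I * (η.1 * x.1 + η.2 * x.2)) * fbgTransform u y η = (2 * Real.pi : ℂ)⁻¹ *
        ∑ α ∈ s, u (y.1 + α.1, y.2 + α.2) * exp (I * ((m - α).1 * η.1 + (m - α).2 * η.2)) := by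
    intro η
    rw [fbgTransform_eq_sum hs, mul_left_comm, Finset.mul_sum]
    simp_rw [← mul_assoc, hphase, mul_comm]
  have hoff : ∀ α ∈ s, α ≠ m →
      u (y.1 + α.1, y.2 + α.2) * (if m = α then (2 * Real.pi : ℂ) ^ 2 else 0) = 0 :=
    fun α _ hα => by simp [Ne.symm hα]
  have hm : m ∉ s → u (y.1 + m.1, y.2 + m.2) * (if m = m then (2 * Real.pi : ℂ) ^ 2 else 0) = 0 :=
    fun hm => by simp [Function.notMem_support.mp fun h => hm (hs h)]
  have hx : (y.1 + m.1, y.2 + m.2) = x := by simp [y]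
  simp_rw [hintegrand]
  rw [integral_const_mul, integral_finsetSum s fun α _ =>
    (by fun_prop : Continuous _).continuousOn.integrableOn_compact (isCompact_Icc.prod isCompact_Icc)]
  simp_rw [integral_const_mul, integral_Icc_prod_exp_I_mul_intCast_dot, sub_eq_zero]
  rw [Finset.sum_eq_single m hoff hm, hx, if_pos rfl]
  field_simp

theorem fbg_inversion_general (u : ℝ × ℝ → ℂ) (hsupp : HasCompactSupport u) :
    ∀ᵐ x : ℝ × ℝ ∂volume,
      u x = (2 * Real.pi : ℂ)⁻¹ *
        ∫ η in (Set.Icc (0:ℝ) (2 * Real.pi) ×ˢ Set.Icc (0:ℝ) (2 * Real.pi)),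
          Complex.exp (Complex.I * (η.1 * x.1 + η.2 * x.2)) *
            fbgTransform u (x.1 - (⌊x.1⌋ : ℝ), x.2 - (⌊x.2⌋ : ℝ)) η :=
  ae_of_all _ fun x => eq_inv_two_pi_mul_integral_exp_mul_fbgTransform hsupp x (⌊x.1⌋, ⌊x.2⌋)

/-- The FBG transform is inverted by formula (26): for every
continuous compactly supported `u : ℝ² → ℂ` and almost every `x ∈ ℝ²`,
`u(x) = (2π)⁻¹ ∫_{[0,2π]²} e^{i η·x} û(x − ⌊x⌋; η) dη`. -/
theorem fbg_inversion (u : ℝ × ℝ → ℂ) (hu : Continuous u) (hsupp : HasCompactSupport u) :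
    ∀ᵐ x : ℝ × ℝ ∂volume,
      u x = (2 * Real.pi : ℂ)⁻¹ *
        ∫ η in (Set.Icc (0:ℝ) (2 * Real.pi) ×ˢ Set.Icc (0:ℝ) (2 * Real.pi)),
          Complex.exp (Complex.I * (η.1 * x.1 + η.2 * x.2)) *
            fbgTransform u (x.1 - (⌊x.1⌋ : ℝ), x.2 - (⌊x.2⌋ : ℝ)) η :=
  fbg_inversion_general u hsupp
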